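/- arXiv:2212.09009 — 3 statements merged into one kernel-verified Lean document; each statement's English description precedes it below -/
import Mathlib

section
/- Let y = μ + Z ∈ ℝ^m where Z ~ P₀ has a symmetric distribution with mean zero, and let q^β denote the 1−β quantile of max_{i∈[m]} |Z_i|. Let γ̂ = argmax_{γ∈[m]} y_γ and define the plausible set Ĝ⁺_ν = {γ ∈ [m] : y_γ ≥ y_{γ̂} − 4 q^ν}. Then for any 0 < ν < α < 1, with q^{(α−ν)}(Ĝ⁺_ν) the 1−(α−ν) quantile of max_{i∈Ĝ⁺_ν} |Z_i| (taken over the data-dependent set), it holds that P{μ_{γ̂} ∈ (y_{γ̂} − q^{(α−ν)}(Ĝ⁺_ν), y_{γ̂} + q^{(α−ν)}(Ĝ⁺_ν))} ≥ 1 − α. -/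
/-!
On the event `‖Z‖∞ ≤ q^ν([m])`, which has probability at least `1 - ν`, the winner `γ̂` lies in
the deterministic set `G = {γ : μ_γ ≥ max μ - 2 q^ν([m])}`, and `G` is contained in the plausible
set `Ĝ⁺_ν`. Hence `|Z_γ̂| ≤ q^{α-ν}(G) ≤ q^{α-ν}(Ĝ⁺_ν)` on the intersection with the event
`max_{i ∈ G} |Z_i| ≤ q^{α-ν}(G)`, and a union bound gives probability at least `1 - α`.
The quantile is attained because `t ↦ P(max_{i ∈ I} |Z_i| ≤ t)` is right-continuous.
-/

open MeasureTheory Set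

section Bonferroni

variable {Ω : Type*} [MeasurableSpace Ω] {P : Measure Ω} [IsProbabilityMeasure P]

lemma measure_add_measure_le_one_add_measure_inter (A : Set Ω) {B : Set Ω}
    (hB : MeasurableSet B) : P A + P B ≤ 1 + P (A ∩ B) :=
  calc P A + P B = P (A ∪ B) + P (A ∩ B) := (measure_union_add_inter A hB).symm
    _ ≤ 1 + P (A ∩ B) := by gcongr; exact prob_le_one

lemma ofReal_one_sub_add_le_measure_inter {A B : Set Ω} (hB : MeasurableSet B) {a b : ℝ}
    (ha : 0 ≤ a) (hb : 0 ≤ b) (hab : a + b ≤ 1)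
    (hPA : ENNReal.ofReal (1 - a) ≤ P A) (hPB : ENNReal.ofReal (1 - b) ≤ P B) :
    ENNReal.ofReal (1 - (a + b)) ≤ P (A ∩ B) := by
  have hsum : ENNReal.ofReal (1 - a) + ENNReal.ofReal (1 - b) =
      1 + ENNReal.ofReal (1 - (a + b)) := by
    rw [← ENNReal.ofReal_add (by linarith) (by linarith), ← ENNReal.ofReal_one,
      ← ENNReal.ofReal_add zero_le_one (by linarith)]
    ring_nf
  refine (ENNReal.add_le_add_iff_left ENNReal.one_ne_top).mp ?_
  calc 1 + ENNReal.ofReal (1 - (a + b))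
      = ENNReal.ofReal (1 - a) + ENNReal.ofReal (1 - b) := hsum.symm
    _ ≤ P A + P B := add_le_add hPA hPB
    _ ≤ 1 + P (A ∩ B) := measure_add_measure_le_one_add_measure_inter A hB

end Bonferroni

section AbsMaxQuantile

variable {ι : Type*}

def absLeOn (I : Set ι) (t : ℝ) : Set (ι → ℝ) := {z | ∀ i ∈ I, |z i| ≤ t}

lemma absLeOn_mono (I : Set ι) : Monotone (absLeOn I) :=
  fun _ _ hst _ hz i hi => (hz i hi).trans hst

lemma absLeOn_subset_absLeOn {I J : Set ι} (h : I ⊆ J) (t : ℝ) : absLeOn J t ⊆ absLeOn I t :=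
  fun _ hz i hi => hz i (h hi)

lemma measurableSet_absLeOn [Countable ι] (I : Set ι) (t : ℝ) : MeasurableSet (absLeOn I t) := by
  have h : absLeOn I t = ⋂ i ∈ I, {z : ι → ℝ | |z i| ≤ t} := by
    ext z; simp [absLeOn]
  rw [h]
  exact .biInter I.to_countable fun i _ =>
    measurableSet_le (measurable_pi_apply i).abs measurable_const

lemma iUnion_absLeOn_natCast [Finite ι] (I : Set ι) : ⋃ n : ℕ, absLeOn I n = univ := by
  refine eq_univ_of_forall fun z => ?_
  obtain ⟨C, hC⟩ := Finite.bddAbove_range fun i => |z i|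
  obtain ⟨n, hn⟩ := exists_nat_ge C
  exact mem_iUnion.mpr ⟨n, fun i _ => (hC (mem_range_self i)).trans hn⟩

lemma iInter_absLeOn_add_one_div (I : Set ι) (t : ℝ) :
    ⋂ n : ℕ, absLeOn I (t + 1 / (n + 1)) = absLeOn I t := by
  refine Subset.antisymm (fun z hz i hi => le_of_forall_pos_le_add fun ε hε => ?_)
    (subset_iInter fun n => absLeOn_mono I (by simp only [le_add_iff_nonneg_right]; positivity))
  obtain ⟨n, hn⟩ := exists_nat_one_div_lt hε
  linarith [mem_iInter.mp hz n i hi]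

lemma absLeOn_eq_empty {I : Set ι} (hI : I.Nonempty) {t : ℝ} (ht : t < 0) : absLeOn I t = ∅ := by
  obtain ⟨i, hi⟩ := hI
  exact eq_empty_of_forall_notMem fun z hz => (abs_nonneg (z i)).not_gt ((hz i hi).trans_lt ht)

/-- The paper's `q^β(I)`: the `1 - β` quantile of `max_{i ∈ I} |Z_i|` for `Z ∼ P`. -/
noncomputable def absMaxQuantile (P : Measure (ι → ℝ)) (β : ℝ) (I : Set ι) : ℝ :=
  sInf {t | ENNReal.ofReal (1 - β) ≤ P (absLeOn I t)}

variable (P : Measure (ι → ℝ)) {β : ℝ}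

lemma nonneg_of_ofReal_one_sub_le_measure_absLeOn {I : Set ι} (hI : I.Nonempty) (hβ : β < 1)
    {t : ℝ} (ht : ENNReal.ofReal (1 - β) ≤ P (absLeOn I t)) : 0 ≤ t := by
  by_contra! hneg
  rw [absLeOn_eq_empty hI hneg, measure_empty, nonpos_iff_eq_zero,
    ENNReal.ofReal_eq_zero] at ht
  linarith

variable [IsProbabilityMeasure P]

lemma exists_ofReal_one_sub_le_measure_absLeOn [Finite ι] (I : Set ι) (hβ : 0 < β) :
    ∃ t, ENNReal.ofReal (1 - β) ≤ P (absLeOn I t) := by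
  have hmono : Monotone fun n : ℕ => absLeOn I n := (absLeOn_mono I).comp Nat.mono_cast
  have hsup : ⨆ n : ℕ, P (absLeOn I n) = 1 := by
    rw [← hmono.measure_iUnion, iUnion_absLeOn_natCast, measure_univ]
  have hlt : ENNReal.ofReal (1 - β) < ⨆ n : ℕ, P (absLeOn I n) := by
    rw [hsup]; exact ENNReal.ofReal_lt_one.mpr (by linarith)
  obtain ⟨n, hn⟩ := lt_iSup_iff.mp hlt
  exact ⟨n, hn.le⟩

lemma absMaxQuantile_nonneg [Finite ι] {I : Set ι} (hI : I.Nonempty) (hβ₀ : 0 < β)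
    (hβ₁ : β < 1) : 0 ≤ absMaxQuantile P β I :=
  le_csInf (exists_ofReal_one_sub_le_measure_absLeOn P I hβ₀) fun _ =>
    nonneg_of_ofReal_one_sub_le_measure_absLeOn P hI hβ₁

lemma ofReal_one_sub_le_measure_absLeOn_absMaxQuantile [Finite ι] (I : Set ι) (hβ : 0 < β) :
    ENNReal.ofReal (1 - β) ≤ P (absLeOn I (absMaxQuantile P β I)) := by
  set S := {t | ENNReal.ofReal (1 - β) ≤ P (absLeOn I t)}
  have hS : S.Nonempty := exists_ofReal_one_sub_le_measure_absLeOn P I hβ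
  have hmem : ∀ n : ℕ, sInf S + 1 / (n + 1) ∈ S := fun n => by
    obtain ⟨t, htS, hlt⟩ := Real.lt_sInf_add_pos hS (by positivity : (0 : ℝ) < 1 / (n + 1))
    exact htS.trans (measure_mono (absLeOn_mono I hlt.le))
  have hanti : Antitone fun n : ℕ => absLeOn I (sInf S + 1 / (n + 1)) := fun k n hkn =>
    absLeOn_mono I (by gcongr)
  rw [absMaxQuantile, ← iInter_absLeOn_add_one_div,
    hanti.measure_iInter (fun _ => (measurableSet_absLeOn I _).nullMeasurableSet)
      ⟨0, measure_ne_top _ _⟩]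
  exact le_iInf hmem

lemma absMaxQuantile_mono [Finite ι] {I J : Set ι} (h : I ⊆ J) (hI : I.Nonempty) (hβ₀ : 0 < β)
    (hβ₁ : β < 1) : absMaxQuantile P β I ≤ absMaxQuantile P β J :=
  csInf_le_csInf ⟨0, fun _ => nonneg_of_ofReal_one_sub_le_measure_absLeOn P hI hβ₁⟩
    (exists_ofReal_one_sub_le_measure_absLeOn P J hβ₀)
    fun _ ht => ht.trans (measure_mono (absLeOn_subset_absLeOn h _))

end AbsMaxQuantile

section NearWinners

variable {ι : Type*} {x y : ι → ℝ} {c : ℝ}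

def nearWinners (x : ι → ℝ) (γ : ι) (r : ℝ) : Set ι := {i | x γ - r ≤ x i}

lemma mem_nearWinners_of_forall_le (hxy : ∀ i, |y i - x i| ≤ c) {γ : ι} (hγ : ∀ i, y i ≤ y γ)
    (γ' : ι) : γ ∈ nearWinners x γ' (2 * c) := by
  have := hγ γ'
  have := abs_le.mp (hxy γ)
  have := abs_le.mp (hxy γ')
  show x γ' - 2 * c ≤ x γ
  linarith

lemma nearWinners_subset_nearWinners (hxy : ∀ i, |y i - x i| ≤ c) {γ γ' : ι}
    (hγ : x γ ≤ x γ') : nearWinners x γ' (2 * c) ⊆ nearWinners y γ (4 * c) := by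
  intro i (hi : x γ' - 2 * c ≤ x i)
  have := abs_le.mp (hxy γ)
  have := abs_le.mp (hxy i)
  show y γ - 4 * c ≤ y i
  linarith

end NearWinners

theorem winner_locally_simultaneous_general
    {m : ℕ}
    (P0 : Measure (Fin m → ℝ)) [IsProbabilityMeasure P0]
    (q : ℝ → Set (Fin m) → ℝ)
    (hq : ∀ β I, q β I =
      sInf {t : ℝ | ENNReal.ofReal (1 - β) ≤ P0 {z | ∀ i ∈ I, |z i| ≤ t}})
    (ghat : (Fin m → ℝ) → Fin m)
    (hghat : ∀ (y : Fin m → ℝ) (i : Fin m), y i ≤ y (ghat y))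
    (μ : Fin m → ℝ) (α ν : ℝ) (hν : 0 < ν) (hνα : ν < α) (hα : α < 1) :
    ENNReal.ofReal (1 - α) ≤
      P0 {z | |(μ + z) (ghat (μ + z)) - μ (ghat (μ + z))| ≤
        q (α - ν) {γ | (μ + z) (ghat (μ + z)) - 4 * q ν Set.univ ≤ (μ + z) γ}} := by
  obtain rfl : q = absMaxQuantile P0 := funext fun β => funext (hq β)
  set c := absMaxQuantile P0 ν univ
  set G := nearWinners μ (ghat μ) (2 * c)
  have hαν : 0 < α - ν := sub_pos.mpr hνα
  have hc : 0 ≤ c := absMaxQuantile_nonneg P0 ⟨ghat μ, mem_univ _⟩ hν (hνα.trans hα)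
  have hG : G.Nonempty := ⟨ghat μ, show μ (ghat μ) - 2 * c ≤ μ (ghat μ) by linarith⟩
  have hA := ofReal_one_sub_le_measure_absLeOn_absMaxQuantile P0 univ hν
  have hB := ofReal_one_sub_le_measure_absLeOn_absMaxQuantile P0 G hαν
  have hAB := ofReal_one_sub_add_le_measure_inter (measurableSet_absLeOn G _) hν.le hαν.le
    (by linarith) hA hB
  rw [add_sub_cancel] at hAB
  refine hAB.trans (measure_mono ?_)
  rintro z ⟨hzA, hzB⟩
  have hz : ∀ i, |(μ + z) i - μ i| ≤ c := fun i => by simpa using hzA i (mem_univ i)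
  calc |(μ + z) (ghat (μ + z)) - μ (ghat (μ + z))|
      = |z (ghat (μ + z))| := by simp
    _ ≤ absMaxQuantile P0 (α - ν) G := hzB _ (mem_nearWinners_of_forall_le hz (hghat _) _)
    _ ≤ _ := absMaxQuantile_mono P0 (nearWinners_subset_nearWinners hz (hghat μ _)) hG hαν
        (by linarith)

/-- Locally simultaneous inference on the winner, parametric location family. -/
theorem winner_locally_simultaneous
    {m : ℕ} (hm : 0 < m)
    (P0 : Measure (Fin m → ℝ)) [IsProbabilityMeasure P0]
    (hmean : ∀ i, ∫ z, z i ∂P0 = 0)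
    (hsym : P0.map (fun z i => -(z i)) = P0)
    (q : ℝ → Set (Fin m) → ℝ)
    (hq : ∀ β I, q β I =
      sInf {t : ℝ | ENNReal.ofReal (1 - β) ≤ P0 {z | ∀ i ∈ I, |z i| ≤ t}})
    (ghat : (Fin m → ℝ) → Fin m)
    (hghat : ∀ (y : Fin m → ℝ) (i : Fin m), y i ≤ y (ghat y))
    (μ : Fin m → ℝ) (α ν : ℝ) (hν : 0 < ν) (hνα : ν < α) (hα : α < 1) :
    ENNReal.ofReal (1 - α) ≤
      P0 {z | |(μ + z) (ghat (μ + z)) - μ (ghat (μ + z))| ≤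
        q (α - ν) {γ | (μ + z) (ghat (μ + z)) - 4 * q ν Set.univ ≤ (μ + z) γ}} :=
  winner_locally_simultaneous_general P0 q hq ghat hghat μ α ν hν hνα hα
end

section
/- For the linear extrapolated LASSO solution β_{(M,s)}(y') = (X_M^⊤X_M)^{−1}(X_M^⊤y' − λs) and any r > 0, the maximum of |X_j^⊤(y' − X_M β_{(M,s)}(y'))| over y' with ‖X^⊤(y'−y)‖_∞ ≤ r equals |X_j^⊤(y − X_M β_{(M,s)}(y))| + r(1 + ‖X_j^⊤ X_M (X_M^⊤X_M)^{−1}‖₁), for any j ∉ M. -/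
open Matrix Set

/-- Submatrix of columns of `X` indexed by a model `M`. -/
def colSub {n d : ℕ} (X : Matrix (Fin n) (Fin d) ℝ) (M : Finset (Fin d)) :
    Matrix (Fin n) {j // j ∈ M} ℝ := fun i j => X i j.val

/-- Linearly extrapolated LASSO solution
`β_{(M,s)}(y) = (X_Mᵀ X_M)⁻¹ (X_Mᵀ y − λ s)`. -/
noncomputable def betaMS {n d : ℕ} (X : Matrix (Fin n) (Fin d) ℝ) (lam : ℝ)
    (M : Finset (Fin d)) (s : {j // j ∈ M} → ℝ) (y : Fin n → ℝ) : {j // j ∈ M} → ℝ :=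
  ((colSub X M)ᵀ * colSub X M)⁻¹ *ᵥ ((colSub X M)ᵀ *ᵥ y - lam • s)

/-! The correlation `X_jᵀ (y' − X_M β(y'))` is affine in the sufficient statistic
`z = Xᵀ (y' − y)`: it is its value `c` at `y` plus `u ⬝ z`, where `u = e_j − w` and `w` is
`X_jᵀ X_M (X_Mᵀ X_M)⁻¹` extended by zero off `M`. Since `j ∉ M`, `‖u‖₁ = 1 + ‖w‖₁`.
By surjectivity of `Xᵀ`, `z` sweeps the whole ℓ∞-ball of radius `r`, over which
`|c + u ⬝ z|` is maximised, by ℓ₁/ℓ∞ duality, at `z = ± r sign u`. -/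

section ExtendByZero

variable {ι R : Type*} [DecidableEq ι]

def extendByZero [Zero R] (M : Finset ι) (w : M → R) : ι → R :=
  fun k => if h : k ∈ M then w ⟨k, h⟩ else 0

lemma extendByZero_of_notMem [Zero R] {M : Finset ι} (w : M → R) {k : ι} (hk : k ∉ M) :
    extendByZero M w k = 0 := by
  simp [extendByZero, hk]

lemma apply_extendByZero {S : Type*} [Zero R] [Zero S] {g : R → S} (hg : g 0 = 0)
    (M : Finset ι) (w : M → R) (k : ι) :
    g (extendByZero M w k) = extendByZero M (g ∘ w) k := by
  unfold extendByZero
  split_ifs <;> simp [hg]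

lemma sum_extendByZero [AddCommMonoid R] [Fintype ι] (M : Finset ι) (w : M → R) :
    ∑ k, extendByZero M w k = ∑ i, w i := by
  rw [← Finset.sum_subset (Finset.subset_univ M) fun k _ hk => extendByZero_of_notMem w hk,
    ← Finset.sum_coe_sort M]
  simp [extendByZero]

lemma dotProduct_extendByZero [NonUnitalNonAssocSemiring R] [Fintype ι] (f : ι → R)
    (M : Finset ι) (w : M → R) :
    f ⬝ᵥ extendByZero M w = (fun i : M => f i) ⬝ᵥ w := by
  have hpt : ∀ k, f k * extendByZero M w k = extendByZero M (fun i => f i * w i) k := by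
    intro k
    unfold extendByZero
    split_ifs <;> simp
  simp only [dotProduct, hpt, sum_extendByZero]

lemma sum_abs_single_sub_extendByZero [Fintype ι] {M : Finset ι} {j : ι} (hj : j ∉ M) (a : ℝ)
    (w : M → ℝ) :
    ∑ k, |((Pi.single j a : ι → ℝ) - extendByZero M w) k| = |a| + ∑ i, |w i| := by
  have hpt : ∀ k, |((Pi.single j a : ι → ℝ) - extendByZero M w) k|
      = (Pi.single j |a| : ι → ℝ) k + extendByZero M (fun i => |w i|) k := by
    intro k
    by_cases hk : k = j
    · subst hk
      simp [extendByZero_of_notMem _ hj]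
    · simp only [Pi.sub_apply, Pi.single_eq_of_ne hk, zero_sub, abs_neg, zero_add]
      exact apply_extendByZero abs_zero M w k
  simp only [hpt, Finset.sum_add_distrib, Finset.sum_pi_single', Finset.mem_univ, if_true,
    sum_extendByZero]

end ExtendByZero

lemma abs_dotProduct_le_sum_abs_mul_norm {ι : Type*} [Fintype ι] (u z : ι → ℝ) :
    |u ⬝ᵥ z| ≤ (∑ i, |u i|) * ‖z‖ :=
  calc |u ⬝ᵥ z| ≤ ∑ i, |u i * z i| := Finset.abs_sum_le_sum_abs _ _
    _ ≤ ∑ i, |u i| * ‖z‖ := Finset.sum_le_sum fun i _ => by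
        rw [abs_mul]; gcongr; exact norm_le_pi_norm z i
    _ = (∑ i, |u i|) * ‖z‖ := (Finset.sum_mul ..).symm

theorem isGreatest_abs_add_dotProduct {ι : Type*} [Fintype ι] (c : ℝ) (u : ι → ℝ) {r : ℝ}
    (hr : 0 ≤ r) :
    IsGreatest {t | ∃ z : ι → ℝ, ‖z‖ ≤ r ∧ t = |c + u ⬝ᵥ z|} (|c| + r * ∑ i, |u i|) := by
  refine ⟨?_, ?_⟩
  · -- `SignType.sign c` would not do: it vanishes at `c = 0`.
    set s : ℝ := if 0 ≤ c then 1 else -1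
    have hs : |s| = 1 := by unfold s; split_ifs <;> simp
    refine ⟨fun i => s * r * SignType.sign (u i), ?_, ?_⟩
    · refine (pi_norm_le_iff_of_nonneg hr).2 fun i => ?_
      rw [Real.norm_eq_abs, abs_mul, abs_mul, hs, abs_of_nonneg hr, one_mul]
      rcases lt_trichotomy (u i) 0 with h | h | h <;> simp [h, hr]
    · have hdot : u ⬝ᵥ (fun i => s * r * SignType.sign (u i)) = s * (r * ∑ i, |u i|) := by
        simp only [dotProduct, Finset.mul_sum]
        refine Finset.sum_congr rfl fun i _ => ?_
        rw [← sign_mul_self (u i)]; ring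
      have hT : 0 ≤ r * ∑ i, |u i| := by positivity
      rw [hdot, eq_comm]
      by_cases hc : 0 ≤ c
      · simp only [s, if_pos hc, one_mul]
        rw [abs_of_nonneg hc, abs_of_nonneg (add_nonneg hc hT)]
      · simp only [s, if_neg hc, neg_one_mul, ← sub_eq_add_neg]
        rw [abs_of_neg (not_le.1 hc), abs_of_neg (by linarith)]
        ring
  · rintro t ⟨z, hz, rfl⟩
    calc |c + u ⬝ᵥ z| ≤ |c| + |u ⬝ᵥ z| := abs_add_le _ _
      _ ≤ |c| + (∑ i, |u i|) * ‖z‖ := by gcongr; exact abs_dotProduct_le_sum_abs_mul_norm u z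
      _ ≤ |c| + r * ∑ i, |u i| := by rw [mul_comm]; gcongr

lemma betaMS_sub {n d : ℕ} (X : Matrix (Fin n) (Fin d) ℝ) (lam : ℝ) (M : Finset (Fin d))
    (s : M → ℝ) (y y' : Fin n → ℝ) :
    betaMS X lam M s y' - betaMS X lam M s y
      = ((colSub X M)ᵀ * colSub X M)⁻¹ *ᵥ ((colSub X M)ᵀ *ᵥ (y' - y)) := by
  rw [betaMS, betaMS, ← mulVec_sub, sub_sub_sub_cancel_right, ← mulVec_sub]

lemma col_dotProduct_residual_eq {n d : ℕ} (X : Matrix (Fin n) (Fin d) ℝ) (lam : ℝ)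
    (M : Finset (Fin d)) (s : M → ℝ) (y y' : Fin n → ℝ) (j : Fin d) :
    (fun i => X i j) ⬝ᵥ (y' - colSub X M *ᵥ betaMS X lam M s y')
      = (fun i => X i j) ⬝ᵥ (y - colSub X M *ᵥ betaMS X lam M s y)
        + (Pi.single j 1 - extendByZero M
            (vecMul (fun i => X i j) (colSub X M * ((colSub X M)ᵀ * colSub X M)⁻¹)))
          ⬝ᵥ (Xᵀ *ᵥ (y' - y)) := by
  have hres : y' - colSub X M *ᵥ betaMS X lam M s y'
      = (y - colSub X M *ᵥ betaMS X lam M s y) + ((y' - y) - colSub X M *ᵥ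
          (((colSub X M)ᵀ * colSub X M)⁻¹ *ᵥ ((colSub X M)ᵀ *ᵥ (y' - y)))) := by
    rw [← betaMS_sub, mulVec_sub]
    abel
  rw [hres, dotProduct_add, sub_dotProduct, single_one_dotProduct, dotProduct_comm _ (Xᵀ *ᵥ _),
    dotProduct_extendByZero]
  congr 1
  rw [dotProduct_sub, dotProduct_mulVec, dotProduct_mulVec, vecMul_vecMul]
  exact congrArg _ (dotProduct_comm _ _)

theorem lasso_perturbation_max_general
    {n d : ℕ} (X : Matrix (Fin n) (Fin d) ℝ) (lam : ℝ)
    (M : Finset (Fin d)) (s : {j // j ∈ M} → ℝ)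
    (hsurj : Function.Surjective (fun v : Fin n → ℝ => Xᵀ *ᵥ v))
    (y : Fin n → ℝ) (r : ℝ) (hr : 0 < r) (j : Fin d) (hj : j ∉ M) :
    IsGreatest
      {t : ℝ | ∃ y' : Fin n → ℝ, ‖Xᵀ *ᵥ (y' - y)‖ ≤ r ∧
        t = |(fun i => X i j) ⬝ᵥ (y' - colSub X M *ᵥ betaMS X lam M s y')|}
      (|(fun i => X i j) ⬝ᵥ (y - colSub X M *ᵥ betaMS X lam M s y)| +
        r * (1 + ∑ i : {j // j ∈ M},
          |vecMul (fun i' => X i' j)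
            (colSub X M * ((colSub X M)ᵀ * colSub X M)⁻¹) i|)) := by
  set w := vecMul (fun i => X i j) (colSub X M * ((colSub X M)ᵀ * colSub X M)⁻¹)
  set u : Fin d → ℝ := Pi.single j 1 - extendByZero M w
  have hset : {t : ℝ | ∃ y' : Fin n → ℝ, ‖Xᵀ *ᵥ (y' - y)‖ ≤ r ∧
        t = |(fun i => X i j) ⬝ᵥ (y' - colSub X M *ᵥ betaMS X lam M s y')|}
      = {t | ∃ z, ‖z‖ ≤ r ∧
        t = |(fun i => X i j) ⬝ᵥ (y - colSub X M *ᵥ betaMS X lam M s y) + u ⬝ᵥ z|} := by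
    ext t
    constructor
    · rintro ⟨y', hy', rfl⟩
      exact ⟨_, hy', by rw [col_dotProduct_residual_eq]⟩
    · rintro ⟨z, hz, rfl⟩
      obtain ⟨v, rfl⟩ := hsurj z
      refine ⟨y + v, by simpa using hz, ?_⟩
      rw [col_dotProduct_residual_eq X lam M s y (y + v), add_sub_cancel_left]
  have hu : ∑ k, |u k| = 1 + ∑ i, |w i| := by
    rw [sum_abs_single_sub_extendByZero hj, abs_one]
  rw [hset, ← hu]
  exact isGreatest_abs_add_dotProduct _ u hr.le

/-- The maximum of `|X_jᵀ (y' − X_M β_{(M,s)}(y'))|` over the ℓ∞-ball of radius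
r in sufficient-statistic space equals its value at y plus
`r (1 + ‖X_jᵀ X_M (X_Mᵀ X_M)⁻¹‖₁)`. -/
theorem lasso_perturbation_max
    {n d : ℕ} (X : Matrix (Fin n) (Fin d) ℝ) (lam : ℝ)
    (M : Finset (Fin d)) (s : {j // j ∈ M} → ℝ)
    (hrank : IsUnit ((colSub X M)ᵀ * colSub X M).det)
    (hsurj : Function.Surjective (fun v : Fin n → ℝ => Xᵀ *ᵥ v))
    (y : Fin n → ℝ) (r : ℝ) (hr : 0 < r) (j : Fin d) (hj : j ∉ M) :
    IsGreatest
      {t : ℝ | ∃ y' : Fin n → ℝ, ‖Xᵀ *ᵥ (y' - y)‖ ≤ r ∧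
        t = |(fun i => X i j) ⬝ᵥ (y' - colSub X M *ᵥ betaMS X lam M s y')|}
      (|(fun i => X i j) ⬝ᵥ (y - colSub X M *ᵥ betaMS X lam M s y)| +
        r * (1 + ∑ i : {j // j ∈ M},
          |vecMul (fun i' => X i' j)
            (colSub X M * ((colSub X M)ᵀ * colSub X M)⁻¹) i|)) :=
  lasso_perturbation_max_general X lam M s hsurj y r hr j hj
end

section
/- Let y = (y₁,y₂) with y_i = μ_i + Z_i, Z₁,Z₂ i.i.d. standard normal, let γ̂ = argmax_{γ∈{1,2}} y_γ, and let q^β(k) denote the 1−β quantile of max_{i∈[k]}|Z_i| for i.i.d. standard normals. Define Ĝ⁺ = {1,2} if |y₂−y₁| ≤ 2√2·q^{0.1α}(1) and Ĝ⁺ = {γ̂} otherwise. Then P{μ_{γ̂} ∈ (y_{γ̂} − q^{0.9α}(|Ĝ⁺|), y_{γ̂} + q^{0.9α}(|Ĝ⁺|))} ≥ 1 − α. -/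
/-!
Let q = q^{0.1α}(1). Since Z₂ − Z₁ ~ N(0, 2), the event A = {|Z₂ − Z₁| ≤ √2 q} has probability
at least 1 − 0.1α, and on A everything is decided by the gap |μ₂ − μ₁|. If the gap is at most √2 q,
then on A the test |y₂ − y₁| ≤ 2√2 q passes, so |Ĝ⁺| = 2 and coverage follows from the simultaneous
event {|Z₁|, |Z₂| < q^{0.9α}(2)}. If the gap exceeds √2 q, then on A the winner γ̂ is the arm
maximising μ, a fixed index, and coverage follows from |Z_γ̂| < q^{0.9α}(1) ≤ q^{0.9α}(|Ĝ⁺|).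
In both cases a union bound with A gives level α.
-/

open MeasureTheory ProbabilityTheory

/-- The 1−β quantile of the maximum of k i.i.d. standard normal absolute values. -/
noncomputable def maxAbsQuantile (β : ℝ) (k : ℕ) : ℝ :=
  sInf {t : ℝ | ENNReal.ofReal (1 - β) ≤
    (Measure.pi fun _ : Fin k => gaussianReal 0 1) {z | ∀ i, |z i| ≤ t}}

open Set Filter Topology
open scoped ENNReal

section AbsBox

variable (ν : Measure ℝ)

lemma measure_abs_lt [NullSingletonClass ν] (t : ℝ) : ν {x | |x| < t} = ν (Icc (-t) t) := by
  simp_rw [abs_lt, ← mem_Ioo]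
  exact measure_congr Ioo_ae_eq_Icc

variable {ι : Type*} [Fintype ι] [SigmaFinite ν]

lemma measure_pi_abs_le (t : ℝ) :
    Measure.pi (fun _ : ι => ν) {z | ∀ i, |z i| ≤ t} = ν (Icc (-t) t) ^ Fintype.card ι := by
  have : {z : ι → ℝ | ∀ i, |z i| ≤ t} = univ.pi fun _ => Icc (-t) t := by
    ext z; simp only [mem_ofPred_eq, mem_univ_pi, mem_Icc, abs_le]
  rw [this, Measure.pi_pi, Finset.prod_const, Finset.card_univ]

lemma measure_pi_abs_lt [NullSingletonClass ν] (t : ℝ) :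
    Measure.pi (fun _ : ι => ν) {z | ∀ i, |z i| < t} = ν (Icc (-t) t) ^ Fintype.card ι := by
  have : {z : ι → ℝ | ∀ i, |z i| < t} = univ.pi fun _ => {x | |x| < t} := by
    ext z; simp
  rw [this, Measure.pi_pi, Finset.prod_const, Finset.card_univ, measure_abs_lt]

end AbsBox

section SymmetricInterval

variable (ν : Measure ℝ)

lemma continuousWithinAt_measure_Icc_neg [IsFiniteMeasure ν] (t : ℝ) :
    ContinuousWithinAt (fun s => ν (Icc (-s) s)) (Ici t) t := by
  rw [← continuousWithinAt_Ioi_iff_Ici]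
  have hinter : ⋂ r > t, Icc (-r) r = Icc (-t) t := by
    ext x
    simp only [mem_iInter, mem_Icc, ← abs_le]
    exact ⟨le_of_forall_gt_imp_ge_of_dense, fun hx r hr => hx.trans hr.le⟩
  have := tendsto_measure_biInter_gt (μ := ν) (s := fun r => Icc (-r) r) (a := t)
    (fun _ _ => nullMeasurableSet_Icc)
    (fun _ _ _ hij => Icc_subset_Icc (neg_le_neg hij) hij) ⟨t + 1, by linarith, measure_ne_top _ _⟩
  rwa [hinter] at this

lemma tendsto_measure_Icc_neg_atTop :
    Tendsto (fun t => ν (Icc (-t) t)) atTop (𝓝 (ν univ)) := by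
  have hunion : ⋃ t : ℝ, Icc (-t) t = univ :=
    eq_univ_of_forall fun x => mem_iUnion.2 ⟨|x|, neg_abs_le x, le_abs_self x⟩
  rw [← hunion]
  exact tendsto_measure_iUnion_atTop fun _ _ hst => Icc_subset_Icc (neg_le_neg hst) hst

end SymmetricInterval

lemma le_apply_csInf_of_rightContinuous {F : ℝ → ℝ≥0∞} {c : ℝ≥0∞} (hF : Monotone F)
    (hFr : ∀ t, ContinuousWithinAt F (Ici t) t) (hne : {t | c ≤ F t}.Nonempty) :
    c ≤ F (sInf {t | c ≤ F t}) := by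
  set a := sInf {t | c ≤ F t}
  have hright : ∀ᶠ t in 𝓝[>] a, c ≤ F t := by
    filter_upwards [self_mem_nhdsWithin] with t (ht : a < t)
    obtain ⟨s, hs, hst⟩ := exists_lt_of_csInf_lt hne ht
    exact hs.trans (hF hst.le)
  exact ge_of_tendsto (continuousWithinAt_Ioi_iff_Ici.2 (hFr a)) hright

lemma maxAbsQuantile_eq_sInf (β : ℝ) (k : ℕ) :
    maxAbsQuantile β k =
      sInf {t | ENNReal.ofReal (1 - β) ≤ gaussianReal 0 1 (Icc (-t) t) ^ k} := by
  simp only [maxAbsQuantile, measure_pi_abs_le, Fintype.card_fin]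

lemma setOf_ofReal_one_sub_le_measure_Icc_pow_nonempty {β : ℝ} (hβ : 0 < β) (k : ℕ) :
    {t | ENNReal.ofReal (1 - β) ≤ gaussianReal 0 1 (Icc (-t) t) ^ k}.Nonempty := by
  have hlim : Tendsto (fun t => gaussianReal 0 1 (Icc (-t) t) ^ k) atTop (𝓝 1) := by
    simpa using ENNReal.Tendsto.pow (n := k) (tendsto_measure_Icc_neg_atTop (gaussianReal 0 1))
  have hlt : ENNReal.ofReal (1 - β) < 1 := ENNReal.ofReal_lt_one.2 (by linarith)
  exact ((hlim.eventually (eventually_gt_nhds hlt)).exists).imp fun _ => le_of_lt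

lemma nonneg_of_ofReal_one_sub_le_measure_Icc_pow {β : ℝ} {k : ℕ} (hβ : β < 1) (hk : k ≠ 0)
    {t : ℝ} (ht : ENNReal.ofReal (1 - β) ≤ gaussianReal 0 1 (Icc (-t) t) ^ k) : 0 ≤ t := by
  by_contra! htneg
  rw [Icc_eq_empty (by linarith), measure_empty, zero_pow hk, nonpos_iff_eq_zero,
    ENNReal.ofReal_eq_zero] at ht
  linarith

lemma ofReal_one_sub_le_measure_Icc_maxAbsQuantile {β : ℝ} (hβ : 0 < β) (k : ℕ) :
    ENNReal.ofReal (1 - β) ≤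
      gaussianReal 0 1 (Icc (-maxAbsQuantile β k) (maxAbsQuantile β k)) ^ k := by
  rw [maxAbsQuantile_eq_sInf]
  refine le_apply_csInf_of_rightContinuous (F := fun t => gaussianReal 0 1 (Icc (-t) t) ^ k)
    (fun s t hst => pow_le_pow_left' (measure_mono (Icc_subset_Icc (neg_le_neg hst) hst)) k)
    (fun t => ?_) (setOf_ofReal_one_sub_le_measure_Icc_pow_nonempty hβ k)
  exact ((ENNReal.continuous_pow k).tendsto _).comp
    (continuousWithinAt_measure_Icc_neg (gaussianReal 0 1) t)

lemma maxAbsQuantile_mono {β : ℝ} (hβ0 : 0 < β) (hβ1 : β < 1) {k m : ℕ} (hk : k ≠ 0)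
    (hkm : k ≤ m) : maxAbsQuantile β k ≤ maxAbsQuantile β m := by
  rw [maxAbsQuantile_eq_sInf, maxAbsQuantile_eq_sInf]
  refine csInf_le_csInf ⟨0, fun t ht => nonneg_of_ofReal_one_sub_le_measure_Icc_pow hβ1 hk ht⟩
    (setOf_ofReal_one_sub_le_measure_Icc_pow_nonempty hβ0 m) fun t ht => ?_
  exact ht.trans (pow_le_pow_right_of_le_one' prob_le_one hkm)

section StandardGaussian

instance : NullSingletonClass (gaussianReal 0 1) := nullSingletonClass_gaussianReal one_ne_zero

variable {ι : Type*} [Fintype ι]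

lemma ofReal_one_sub_le_measure_pi_abs_lt_maxAbsQuantile {β : ℝ} (hβ : 0 < β) (k : ℕ) :
    ENNReal.ofReal (1 - β) ≤
      Measure.pi (fun _ : Fin k => gaussianReal 0 1) {z | ∀ i, |z i| < maxAbsQuantile β k} := by
  rw [measure_pi_abs_lt, Fintype.card_fin]
  exact ofReal_one_sub_le_measure_Icc_maxAbsQuantile hβ k

lemma ofReal_one_sub_le_measure_pi_abs_apply_lt_maxAbsQuantile {β : ℝ} (hβ : 0 < β) (i : ι) :
    ENNReal.ofReal (1 - β) ≤
      Measure.pi (fun _ : ι => gaussianReal 0 1) {z | |z i| < maxAbsQuantile β 1} := by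
  have hmeas : MeasurableSet {x : ℝ | |x| < maxAbsQuantile β 1} :=
    measurableSet_lt measurable_abs measurable_const
  rw [show {z : ι → ℝ | |z i| < maxAbsQuantile β 1} =
      Function.eval i ⁻¹' {x | |x| < maxAbsQuantile β 1} from rfl,
    (measurePreserving_eval _ i).measure_preimage hmeas.nullMeasurableSet, measure_abs_lt,
    ← pow_one (gaussianReal 0 1 _)]
  exact ofReal_one_sub_le_measure_Icc_maxAbsQuantile hβ 1

lemma map_pi_sub_eq_gaussianReal {i j : ι} (hij : i ≠ j) :
    (Measure.pi fun _ : ι => gaussianReal 0 1).map (fun z => z i - z j) = gaussianReal 0 2 := by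
  have hindep := (iIndepFun_pi (μ := fun _ : ι => gaussianReal 0 1) (X := fun _ => id)
    fun _ => aemeasurable_id).indepFun hij
  have hi := (measurePreserving_eval (fun _ : ι => gaussianReal 0 1) i).map_eq
  have hj : (Measure.pi fun _ : ι => gaussianReal 0 1).map (Neg.neg ∘ Function.eval j) =
      gaussianReal 0 1 := by
    rw [← Measure.map_map measurable_neg
      (measurePreserving_eval (fun _ : ι => gaussianReal 0 1) j).measurable,
      (measurePreserving_eval (fun _ : ι => gaussianReal 0 1) j).map_eq, gaussianReal_map_neg,
      neg_zero]
  have := gaussianReal_add_gaussianReal_of_indepFun (hindep.comp measurable_id measurable_neg)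
    hi hj
  rw [show (fun z : ι → ℝ => z i - z j) = (fun z => z i) + Neg.neg ∘ fun z => z j from
    funext fun z => sub_eq_add_neg _ _]
  convert this using 2 <;> norm_num

lemma measure_pi_abs_sub_le {i j : ι} (hij : i ≠ j) (t : ℝ) :
    Measure.pi (fun _ : ι => gaussianReal 0 1) {z | |z i - z j| ≤ √2 * t} =
      gaussianReal 0 1 (Icc (-t) t) := by
  have hscale : (gaussianReal 0 1).map (√2 * ·) = gaussianReal 0 2 := by
    rw [gaussianReal_map_const_mul]
    congr 1
    · simp
    · ext; simp
  have hmeas : MeasurableSet {x : ℝ | |x| ≤ √2 * t} :=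
    measurableSet_le measurable_abs measurable_const
  rw [show {z : ι → ℝ | |z i - z j| ≤ √2 * t} =
      (fun z => z i - z j) ⁻¹' {x | |x| ≤ √2 * t} from rfl,
    ← Measure.map_apply (by fun_prop) hmeas, map_pi_sub_eq_gaussianReal hij, ← hscale,
    Measure.map_apply (by fun_prop) hmeas]
  congr 1
  ext x
  rw [mem_preimage, mem_ofPred_eq, abs_mul, abs_of_pos (by positivity : (0 : ℝ) < √2),
    mul_le_mul_iff_right₀ (by positivity), abs_le, mem_Icc]

end StandardGaussian

lemma ofReal_one_sub_add_le_measure_of_inter_subset {Ω : Type*} [MeasurableSpace Ω]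
    {P : Measure Ω} [IsProbabilityMeasure P] {A B G : Set Ω} (hB : MeasurableSet B) {a b : ℝ}
    (hPA : ENNReal.ofReal (1 - a) ≤ P A) (hPB : ENNReal.ofReal (1 - b) ≤ P B)
    (hABG : A ∩ B ⊆ G) : ENNReal.ofReal (1 - (a + b)) ≤ P G := by
  refine le_trans ?_ (measure_mono hABG)
  rw [ENNReal.ofReal_le_iff_le_toReal (measure_ne_top _ _)] at hPA hPB ⊢
  have hunion := measureReal_union_add_inter (μ := P) (s := A) hB
  have hle : P.real (A ∪ B) ≤ 1 := measureReal_le_one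
  simp only [measureReal_def] at hunion hle
  linarith

lemma argmax_add_eq_of_abs_sub_lt {ι : Type*} (ghat : (ι → ℝ) → ι)
    (hghat : ∀ (y : ι → ℝ) (i : ι), y i ≤ y (ghat y)) {μ z : ι → ℝ}
    (h : ∀ j ≠ ghat μ, |z (ghat μ) - z j| < μ (ghat μ) - μ j) : ghat (μ + z) = ghat μ := by
  by_contra hne
  have hwin := hghat (μ + z) (ghat μ)
  simp only [Pi.add_apply] at hwin
  linarith [h _ hne, neg_abs_le (z (ghat μ) - z (ghat (μ + z)))]

lemma abs_sub_eq_abs_sub_one_zero {i j : Fin 2} (hij : i ≠ j) (f : Fin 2 → ℝ) :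
    |f i - f j| = |f 1 - f 0| := by
  fin_cases i <;> fin_cases j <;> simp_all [abs_sub_comm]

lemma argmax_add_eq_of_abs_sub_lt_fin_two (ghat : (Fin 2 → ℝ) → Fin 2)
    (hghat : ∀ (y : Fin 2 → ℝ) (i : Fin 2), y i ≤ y (ghat y)) {μ z : Fin 2 → ℝ}
    (h : |z 1 - z 0| < |μ 1 - μ 0|) : ghat (μ + z) = ghat μ := by
  refine argmax_add_eq_of_abs_sub_lt ghat hghat fun j hj => ?_
  rw [← abs_of_nonneg (sub_nonneg.2 (hghat μ j)), abs_sub_eq_abs_sub_one_zero hj.symm,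
    abs_sub_eq_abs_sub_one_zero hj.symm]
  exact h

/-- Two-armed inference on the winner: the locally simultaneous interval with
data-dependent plausible set is valid at level 1−α. -/
theorem two_armed_winner
    (μ : Fin 2 → ℝ) (α : ℝ) (hα : 0 < α) (hα1 : α < 1)
    (ghat : (Fin 2 → ℝ) → Fin 2)
    (hghat : ∀ (y : Fin 2 → ℝ) (i : Fin 2), y i ≤ y (ghat y)) :
    ENNReal.ofReal (1 - α) ≤ (Measure.pi fun _ : Fin 2 => gaussianReal 0 1)
      {z | |(μ + z) (ghat (μ + z)) - μ (ghat (μ + z))| <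
        maxAbsQuantile (0.9 * α)
          (if |(μ + z) 1 - (μ + z) 0| ≤
              2 * Real.sqrt 2 * maxAbsQuantile (0.1 * α) 1
           then 2 else 1)} := by
  have h1 : (0 : ℝ) < 0.1 * α := by positivity
  have h9 : (0 : ℝ) < 0.9 * α := by positivity
  set q := maxAbsQuantile (0.1 * α) 1
  have hA : ENNReal.ofReal (1 - 0.1 * α) ≤ (Measure.pi fun _ : Fin 2 => gaussianReal 0 1)
      {z | |z 1 - z 0| ≤ √2 * q} := by
    rw [measure_pi_abs_sub_le (by decide), ← pow_one (gaussianReal 0 1 _)]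
    exact ofReal_one_sub_le_measure_Icc_maxAbsQuantile h1 1
  nth_rewrite 1 [show α = 0.1 * α + 0.9 * α by ring]
  by_cases hgap : |μ 1 - μ 0| ≤ √2 * q
  · refine ofReal_one_sub_add_le_measure_of_inter_subset (by measurability) hA
      (ofReal_one_sub_le_measure_pi_abs_lt_maxAbsQuantile h9 2) fun z ⟨hzA, hzB⟩ => ?_
    have hsel : |(μ + z) 1 - (μ + z) 0| ≤ 2 * √2 * q := by
      calc |(μ + z) 1 - (μ + z) 0| = |(μ 1 - μ 0) + (z 1 - z 0)| := by
            rw [Pi.add_apply, Pi.add_apply, add_sub_add_comm]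
        _ ≤ |μ 1 - μ 0| + |z 1 - z 0| := abs_add_le _ _
        _ ≤ 2 * √2 * q := by linarith [show |z 1 - z 0| ≤ √2 * q from hzA]
    rw [mem_ofPred_eq, if_pos hsel, Pi.add_apply, add_sub_cancel_left]
    exact hzB _
  · refine ofReal_one_sub_add_le_measure_of_inter_subset (by measurability) hA
      (ofReal_one_sub_le_measure_pi_abs_apply_lt_maxAbsQuantile h9 (ghat μ))
      fun z ⟨hzA, hzB⟩ => ?_
    have hwin : ghat (μ + z) = ghat μ :=
      argmax_add_eq_of_abs_sub_lt_fin_two ghat hghat (lt_of_le_of_lt hzA (not_le.1 hgap))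
    simp only [mem_ofPred_eq, hwin, Pi.add_apply, add_sub_cancel_left]
    refine lt_of_lt_of_le hzB (maxAbsQuantile_mono h9 (by linarith) one_ne_zero ?_)
    split_ifs <;> norm_num
end
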